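/- arXiv:math/0606094 — 2 statements merged into one kernel-verified Lean document; each statement's English description precedes it below -/
import Mathlib

section
/- The graded abelian groups G_n defined recursively by G_0(i) = ℤ_{(1)} for i=1, ℤ_{(0)}³ for i=0, ℤ_{(-1)} for i=-1, and the recursion of Theorem 1.2 with t=0, τ=0, g=1, satisfy the closed formula: G_n(1) = ⊕_{k=0}^{n} ℤ^{2^n·C(n,k)} in grading 1-k, G_n(0) = ℤ in grading 0 plus ⊕_{k=0}^{n} ℤ^{2^{n+1}·C(n,k)} in grading -k, and G_n(-1) = ⊕_{k=0}^{n} ℤ^{2^n·C(n,k)} in grading -1-k. -/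
/-- The ranks, in each Maslov grading `m : ℤ`, of the three graded groups
`(HFK(Dⁿ,1), HFK(Dⁿ,0), HFK(Dⁿ,-1))` of the `n`-th iterated untwisted Whitehead
double of the figure eight knot, computed recursively from Theorem 1.2 with
parameters `t = 0`, `τ = 0`, `g = 1`.  The base case is the figure eight knot
`D⁰ = 4₁`, and the recursive step forms the filtration homologies
`F(-1) = Cₙ`, `F(0) = ker(d₁⁰ : Bₙ → Cₙ[-1])` (using that `d₁⁰` is surjective),
`F(1) = ℤ₍₀₎`, sums them into `S`, and applies Theorem 1.2. -/
def whiteheadTriple : ℕ → (ℤ → ℕ) × (ℤ → ℕ) × (ℤ → ℕ)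
  | 0 =>
    (fun m => if m = 1 then 1 else 0,
     fun m => if m = 0 then 3 else 0,
     fun m => if m = -1 then 1 else 0)
  | n + 1 =>
    let B := (whiteheadTriple n).2.1
    let C := (whiteheadTriple n).2.2
    -- homology of the filtration levels F(-1) ⊆ F(0) ⊆ F(1)
    let F0 : ℤ → ℕ := fun m => B m - C (m - 1)
    let F1 : ℤ → ℕ := fun m => if m = 0 then 1 else 0
    let S : ℤ → ℕ := fun m => C m + F0 m + F1 m
    (fun m => 2 * S (m - 1) - (if m = 1 then 4 else 0),
     fun m => 4 * S m - (if m = 0 then 7 else 0),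
     fun m => 2 * S (m + 1) - (if m = -1 then 4 else 0))

/-! Extend `C(n, j)` by zero to integers `j < 0`. The claimed ranks are then
`2ⁿ·C(n, 1 - m)`, `[m = 0] + 2ⁿ⁺¹·C(n, -m)` and `2ⁿ·C(n, -1 - m)`. Feeding these into the
recursion, `F(0)` has ranks `[m = 0] + 2ⁿ·C(n, -m)`, so by Pascal's rule the sum
`S = F(-1) ⊕ F(0) ⊕ F(1)` has ranks `2·[m = 0] + 2ⁿ·C(n + 1, -m)`; doubling or quadrupling `S`
and removing `ℤ⁴` resp. `ℤ⁷` gives the claimed ranks at level `n + 1`. -/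

def truncChoose (n : ℕ) (j : ℤ) : ℕ :=
  if 0 ≤ j then n.choose j.toNat else 0

theorem truncChoose_succ (n : ℕ) (j : ℤ) :
    truncChoose (n + 1) j = truncChoose n j + truncChoose n (j - 1) := by
  unfold truncChoose
  obtain hj | rfl | hj := lt_trichotomy j 0
  · rw [if_neg (by omega), if_neg (by omega), if_neg (by omega)]
  · simp
  · rw [if_pos hj.le, if_pos hj.le, if_pos (by omega), show j.toNat = (j - 1).toNat + 1 by omega,
      Nat.choose_succ_succ', add_comm]

theorem ite_mul_choose_eq_mul_truncChoose (n c : ℕ) (j : ℤ) :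
    (if 0 ≤ j ∧ j ≤ n then c * n.choose j.toNat else 0) = c * truncChoose n j := by
  unfold truncChoose
  by_cases hj : 0 ≤ j
  · by_cases hjn : j ≤ n
    · simp [hj, hjn]
    · simp [hj, hjn, Nat.choose_eq_zero_of_lt (show n < j.toNat by omega)]
  · simp [hj]

theorem truncChoose_zero (j : ℤ) : truncChoose 0 j = if j = 0 then 1 else 0 := by
  unfold truncChoose
  obtain hj | rfl | hj := lt_trichotomy j 0
  · rw [if_neg (by omega), if_neg (by omega)]
  · simp
  · rw [if_pos hj.le, if_neg hj.ne', Nat.choose_eq_zero_of_lt (by omega)]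

def closedTriple (n : ℕ) : (ℤ → ℕ) × (ℤ → ℕ) × (ℤ → ℕ) :=
  (fun m => 2 ^ n * truncChoose n (1 - m),
   fun m => (if m = 0 then 1 else 0) + 2 ^ (n + 1) * truncChoose n (-m),
   fun m => 2 ^ n * truncChoose n (-1 - m))

theorem closedTriple_filtration_sum (n : ℕ) (m : ℤ) :
    (closedTriple n).2.2 m + ((closedTriple n).2.1 m - (closedTriple n).2.2 (m - 1)) +
        (if m = 0 then 1 else 0) =
      2 * (if m = 0 then 1 else 0) + 2 ^ n * truncChoose (n + 1) (-m) := by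
  have h2 : 2 ^ (n + 1) * truncChoose n (-m) = 2 * (2 ^ n * truncChoose n (-m)) := by ring
  simp only [closedTriple, truncChoose_succ, show -1 - (m - 1) = -m by ring,
    show -m - 1 = -1 - m by ring, mul_add, h2]
  split_ifs <;> omega

theorem whiteheadTriple_eq_closedTriple (n : ℕ) : whiteheadTriple n = closedTriple n := by
  induction n with
  | zero =>
    simp only [whiteheadTriple, closedTriple, truncChoose_zero]
    refine Prod.ext (funext fun m => ?_) (Prod.ext (funext fun m => ?_) (funext fun m => ?_)) <;>
      dsimp only <;> split_ifs <;> first | rfl | omega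
  | succ n ih =>
    simp only [whiteheadTriple, ih, closedTriple_filtration_sum]
    refine Prod.ext (funext fun m => ?_) (Prod.ext (funext fun m => ?_) (funext fun m => ?_))
    all_goals
      simp only [closedTriple, neg_sub, show -(m + 1) = -1 - m by ring, pow_succ', mul_assoc]
      split_ifs <;> omega

/-- Proposition 7.1 (closed formula for the knot Floer homology of the iterated
untwisted Whitehead doubles of the figure eight knot): the recursively defined
graded ranks satisfy
`Gₙ(1) = ⊕ₖ ℤ^{2ⁿ·C(n,k)}` in grading `1 - k`,
`Gₙ(0) = ℤ₍₀₎ ⊕ ⊕ₖ ℤ^{2ⁿ⁺¹·C(n,k)}` in grading `-k`, and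
`Gₙ(-1) = ⊕ₖ ℤ^{2ⁿ·C(n,k)}` in grading `-1 - k`, for `k = 0, …, n`. -/
theorem whiteheadTriple_closed_formula (n : ℕ) :
    ((whiteheadTriple n).1 = fun m => if 1 - (n : ℤ) ≤ m ∧ m ≤ 1 then
        2 ^ n * Nat.choose n (1 - m).toNat else 0) ∧
    ((whiteheadTriple n).2.1 = fun m => (if m = 0 then 1 else 0) +
        (if -(n : ℤ) ≤ m ∧ m ≤ 0 then 2 ^ (n + 1) * Nat.choose n (-m).toNat else 0)) ∧
    ((whiteheadTriple n).2.2 = fun m => if -1 - (n : ℤ) ≤ m ∧ m ≤ -1 then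
        2 ^ n * Nat.choose n (-1 - m).toNat else 0) := by
  rw [whiteheadTriple_eq_closedTriple]
  refine ⟨funext fun m => ?_, funext fun m => ?_, funext fun m => ?_⟩ <;>
    simp only [closedTriple, ← ite_mul_choose_eq_mul_truncChoose] <;>
    split_ifs <;> first | rfl | omega
end

section
/- Let F : ℤ → Subcomplexes be an increasing filtration of a chain complex C with H(C) ≅ ℤ in degree 0, with F(j) = 0 for j < -g and F(j) = C for j ≥ g. Define τ = min{ j : H_0(F(j)) → H_0(C) ≅ ℤ is nonzero }. Then summing the long exact sequences over j = -g, …, g: Σ_j rank H_0(F(j)) - Σ_j rank H_1(C/F(j)) = g - τ + 1, and Σ_j rank H_0(C/F(j)) - Σ_j rank H_{-1}(F(j)) = g + τ. -/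
open Module

lemma my_rank_nullity {M N : Type*} [AddCommGroup M] [Module ℤ M] [Module.Finite ℤ M]
    [AddCommGroup N] [Module ℤ N] (f : M →ₗ[ℤ] N) :
    finrank ℤ (LinearMap.range f) + finrank ℤ (LinearMap.ker f) = finrank ℤ M := by
  have h := LinearMap.lift_rank_range_add_rank_ker f
  have : IsNoetherian ℤ M := isNoetherian_of_isNoetherianRing_of_finite ℤ M
  rw [← finrank_eq_rank, ← finrank_eq_rank, ← finrank_eq_rank] at h
  simp only [Cardinal.lift_natCast, ← Nat.cast_add, Nat.cast_inj] at h
  haveI := AddCommGroup.uniqueIntModule (M := ↥(LinearMap.range f))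
  haveI := AddCommGroup.uniqueIntModule (M := ↥(LinearMap.ker f))
  convert h using 3
  · rfl
  · exact Subsingleton.elim _ _
  · rfl
  · exact Subsingleton.elim _ _

lemma my_int_submodule {N : Submodule ℤ ℤ} (h : N ≠ ⊥) : finrank ℤ N = 1 := by
  have h1 : finrank ℤ N ≤ 1 := by simpa using Submodule.finrank_le N
  have h2 : 1 ≤ finrank ℤ N := Submodule.one_le_finrank_iff.mpr h
  omega

lemma my_finrank_range_eq {M N : Type*} [AddCommGroup M] [Module ℤ M] [Module.Finite ℤ M]
    [AddCommGroup N] [Module ℤ N] (f : M →ₗ[ℤ] N) (h : Function.Injective f) :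
    finrank ℤ (LinearMap.range f) = finrank ℤ M := by
  have h2 := my_rank_nullity f
  rw [LinearMap.ker_eq_bot.mpr h] at h2
  have hb : finrank ℤ (↥(⊥ : Submodule ℤ M)) = 0 := finrank_zero_of_subsingleton
  omega

/-- Lemma 5.3, quantitative form: let `F(j)` be an increasing filtration of a
complex `C` with `H(C) ≅ ℤ` in degree `0`, trivial for `j < -g` and all of `C`
for `j ≥ g`, and let `τ` be the least `j` for which `H₀(F(j)) → H₀(C) ≅ ℤ` is
nonzero.  For each `j` the six-term exact fragment
`0 → H₁(C/F(j)) → H₀(F(j)) → ℤ → H₀(C/F(j)) → H₋₁(F(j)) → 0` holds, with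
middle map nonzero iff `j ≥ τ`.  Summing the resulting rank identities over
`j = -g, …, g` gives
`Σⱼ rank H₀(F(j)) - Σⱼ rank H₁(C/F(j)) = g - τ + 1` and
`Σⱼ rank H₀(C/F(j)) - Σⱼ rank H₋₁(F(j)) = g + τ`. -/
theorem filtration_rank_sums (g τ : ℤ) (hg : -g ≤ τ) (hτ : τ ≤ g)
    (H0F H1Q H0Q Hm1F : ℤ → Type*)
    [∀ j, AddCommGroup (H0F j)] [∀ j, Module ℤ (H0F j)] [∀ j, Module.Finite ℤ (H0F j)]
    [∀ j, AddCommGroup (H1Q j)] [∀ j, Module ℤ (H1Q j)] [∀ j, Module.Finite ℤ (H1Q j)]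
    [∀ j, AddCommGroup (H0Q j)] [∀ j, Module ℤ (H0Q j)] [∀ j, Module.Finite ℤ (H0Q j)]
    [∀ j, AddCommGroup (Hm1F j)] [∀ j, Module ℤ (Hm1F j)] [∀ j, Module.Finite ℤ (Hm1F j)]
    (f₁ : ∀ j, H1Q j →ₗ[ℤ] H0F j) (f₂ : ∀ j, H0F j →ₗ[ℤ] ℤ)
    (f₃ : ∀ j, ℤ →ₗ[ℤ] H0Q j) (f₄ : ∀ j, H0Q j →ₗ[ℤ] Hm1F j)
    (hinj : ∀ j, Function.Injective (f₁ j))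
    (hex₁ : ∀ j, Function.Exact (f₁ j) (f₂ j))
    (hex₂ : ∀ j, Function.Exact (f₂ j) (f₃ j))
    (hex₃ : ∀ j, Function.Exact (f₃ j) (f₄ j))
    (hsurj : ∀ j, Function.Surjective (f₄ j))
    (hnz : ∀ j, f₂ j ≠ 0 ↔ τ ≤ j) :
    (∑ j ∈ Finset.Icc (-g) g, (Module.finrank ℤ (H0F j) : ℤ)) -
        (∑ j ∈ Finset.Icc (-g) g, (Module.finrank ℤ (H1Q j) : ℤ)) = g - τ + 1 ∧
    (∑ j ∈ Finset.Icc (-g) g, (Module.finrank ℤ (H0Q j) : ℤ)) -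
        (∑ j ∈ Finset.Icc (-g) g, (Module.finrank ℤ (Hm1F j) : ℤ)) = g + τ := by
  have hr2 : ∀ j, (finrank ℤ (LinearMap.range (f₂ j)) : ℤ) = if τ ≤ j then 1 else 0 := by
    intro j
    by_cases h : τ ≤ j
    · rw [if_pos h]
      have hne : f₂ j ≠ 0 := (hnz j).mpr h
      have : LinearMap.range (f₂ j) ≠ ⊥ := by
        simpa [LinearMap.range_eq_bot] using hne
      exact_mod_cast my_int_submodule this
    · rw [if_neg h]
      have hz : f₂ j = 0 := by
        by_contra hc; exact h ((hnz j).mp hc)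
      simp [hz]
  have key1 : ∀ j, (finrank ℤ (H0F j) : ℤ) - finrank ℤ (H1Q j) = if τ ≤ j then 1 else 0 := by
    intro j
    have hrn := my_rank_nullity (f₂ j)
    have hker : LinearMap.ker (f₂ j) = LinearMap.range (f₁ j) := (hex₁ j).linearMap_ker_eq
    have h1 : finrank ℤ (LinearMap.ker (f₂ j)) = finrank ℤ (H1Q j) := by
      rw [hker]; exact my_finrank_range_eq (f₁ j) (hinj j)
    rw [h1] at hrn
    rw [← hr2 j]; push_cast [← hrn]; ring
  have key2 : ∀ j, (finrank ℤ (H0Q j) : ℤ) - finrank ℤ (Hm1F j) = if j < τ then 1 else 0 := by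
    intro j
    have hrn3 := my_rank_nullity (f₃ j)
    have hker3 : LinearMap.ker (f₃ j) = LinearMap.range (f₂ j) := (hex₂ j).linearMap_ker_eq
    rw [hker3, finrank_self] at hrn3
    have hrn4 := my_rank_nullity (f₄ j)
    have hker4 : LinearMap.ker (f₄ j) = LinearMap.range (f₃ j) := (hex₃ j).linearMap_ker_eq
    have htop : finrank ℤ (LinearMap.range (f₄ j)) = finrank ℤ (Hm1F j) := by
      rw [LinearMap.range_eq_top.mpr (hsurj j)]
      have ht := finrank_top ℤ (Hm1F j)
      haveI := AddCommGroup.uniqueIntModule (M := ↥(⊤ : Submodule ℤ (Hm1F j)))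
      convert ht using 2 <;> exact Subsingleton.elim _ _
    rw [hker4, htop] at hrn4
    have h2 := hr2 j
    by_cases h : τ ≤ j
    · rw [if_pos h] at h2; rw [if_neg (by omega)]; omega
    · rw [if_neg h] at h2; rw [if_pos (by omega)]; omega
  have c1 : (Finset.Icc (-g) g).filter (fun j => τ ≤ j) = Finset.Icc τ g := by
    ext j; simp only [Finset.mem_filter, Finset.mem_Icc]; omega
  have c2 : (Finset.Icc (-g) g).filter (fun j => j < τ) = Finset.Icc (-g) (τ - 1) := by
    ext j; simp only [Finset.mem_filter, Finset.mem_Icc]; omega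
  constructor
  · rw [← Finset.sum_sub_distrib]
    rw [Finset.sum_congr rfl fun j _ => key1 j, ← Finset.sum_filter, c1,
      Finset.sum_const, nsmul_eq_mul, mul_one, Int.card_Icc]
    omega
  · rw [← Finset.sum_sub_distrib]
    rw [Finset.sum_congr rfl fun j _ => key2 j, ← Finset.sum_filter, c2,
      Finset.sum_const, nsmul_eq_mul, mul_one, Int.card_Icc]
    omega
end
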